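/- arXiv:2603.20726 — 5 statements merged into one kernel-verified Lean document; each statement's English description precedes it below -/
import Mathlib

section
/- For all real numbers p and q, φ(p,q) = 0 if and only if p ≥ 0, q ≥ 0 and p·q = 0 (i.e., φ is an NCP-function). -/
/-- The Kanzow–Schwartz regularization function. -/
noncomputable def phi (p q : ℝ) : ℝ :=
  if 0 ≤ p + q then p * q else -(p ^ 2 + q ^ 2) / 2

theorem phi_of_add_nonneg {p q : ℝ} (h : 0 ≤ p + q) : phi p q = p * q := if_pos h

theorem phi_neg_of_add_neg {p q : ℝ} (h : p + q < 0) : phi p q < 0 := by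
  rw [phi, if_neg h.not_ge]
  have hpq : 0 < p ^ 2 + q ^ 2 := by
    rcases lt_or_ge p 0 with hp | hp
    · nlinarith [sq_nonneg q]
    · nlinarith [sq_nonneg p]
  linarith

theorem nonneg_and_nonneg_of_mul_eq_zero_of_add_nonneg {α : Type*} [NonUnitalNonAssocSemiring α]
    [NoZeroDivisors α] [Preorder α] {p q : α} (hmul : p * q = 0)
    (hadd : 0 ≤ p + q) : 0 ≤ p ∧ 0 ≤ q := by
  rcases mul_eq_zero.mp hmul with rfl | rfl
  · exact ⟨le_rfl, by simpa using hadd⟩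
  · exact ⟨by simpa using hadd, le_rfl⟩

/-- φ is an NCP-function: φ(p,q) = 0 iff p ≥ 0, q ≥ 0 and p·q = 0. -/
theorem phi_eq_zero_iff (p q : ℝ) :
    phi p q = 0 ↔ 0 ≤ p ∧ 0 ≤ q ∧ p * q = 0 := by
  by_cases hadd : 0 ≤ p + q
  · rw [phi_of_add_nonneg hadd]
    refine ⟨fun hmul => ?_, fun h => h.2.2⟩
    obtain ⟨hp, hq⟩ := nonneg_and_nonneg_of_mul_eq_zero_of_add_nonneg hmul hadd
    exact ⟨hp, hq, hmul⟩
  · have hneg : p + q < 0 := not_le.mp hadd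
    refine ⟨fun h => absurd h (phi_neg_of_add_neg hneg).ne, fun ⟨hp, hq, _⟩ => ?_⟩
    exact absurd (add_nonneg hp hq) hadd
end

section
/- The function φ : ℝ × ℝ → ℝ is continuously differentiable (of class C¹) on all of ℝ × ℝ. -/
open Set Filter Topology

lemma hasDerivAt_max_zero_sq (x : ℝ) :
    HasDerivAt (fun y : ℝ => max y 0 ^ 2) (2 * max x 0) x := by
  rcases lt_trichotomy x 0 with hx | rfl | hx
  · have hzero : (fun y : ℝ => max y 0 ^ 2) =ᶠ[𝓝 x] fun _ => 0 := by
      filter_upwards [eventually_lt_nhds hx] with y hy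
      simp [max_eq_right hy.le]
    simpa [max_eq_right hx.le] using (hasDerivAt_const x (0 : ℝ)).congr_of_eventuallyEq hzero
  · have hleft : HasDerivWithinAt (fun y : ℝ => max y 0 ^ 2) 0 (Iic 0) 0 :=
      (hasDerivWithinAt_const 0 _ 0).congr (fun y hy => by simp [max_eq_right (mem_Iic.1 hy)]) (by simp)
    have hright : HasDerivWithinAt (fun y : ℝ => max y 0 ^ 2) 0 (Ici 0) 0 := by
      simpa using ((hasDerivAt_pow 2 (0 : ℝ)).hasDerivWithinAt (s := Ici 0)).congr
        (fun y hy => by simp [max_eq_left (mem_Ici.1 hy)]) (by simp)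
    simpa [Iic_union_Ici, hasDerivWithinAt_univ] using hleft.union hright
  · have hsq : (fun y : ℝ => max y 0 ^ 2) =ᶠ[𝓝 x] fun y => y ^ 2 := by
      filter_upwards [eventually_gt_nhds hx] with y hy
      simp [max_eq_left hy.le]
    simpa [max_eq_left hx.le] using (hasDerivAt_pow 2 x).congr_of_eventuallyEq hsq

lemma contDiff_max_zero_sq : ContDiff ℝ 1 fun y : ℝ => max y 0 ^ 2 := by
  have hderiv : deriv (fun y : ℝ => max y 0 ^ 2) = fun x => 2 * max x 0 :=
    funext fun x => (hasDerivAt_max_zero_sq x).deriv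
  refine contDiff_one_iff_deriv.2 ⟨fun x => (hasDerivAt_max_zero_sq x).differentiableAt, ?_⟩
  rw [hderiv]
  fun_prop

lemma phi_eq_max_zero_sq (p q : ℝ) :
    phi p q = (max (p + q) 0 ^ 2 - p ^ 2 - q ^ 2) / 2 := by
  unfold phi
  split_ifs with h
  · rw [max_eq_left h]; ring
  · rw [max_eq_right (not_le.1 h).le]; ring

/-- φ is continuously differentiable on all of ℝ × ℝ. -/
theorem phi_contDiff :
    ContDiff ℝ 1 (fun x : ℝ × ℝ => phi x.1 x.2) := by
  simp_rw [phi_eq_max_zero_sq]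
  have hmax : ContDiff ℝ 1 fun x : ℝ × ℝ => max (x.1 + x.2) 0 ^ 2 :=
    contDiff_max_zero_sq.comp (contDiff_fst.add contDiff_snd)
  exact ((hmax.sub (contDiff_fst.pow 2)).sub (contDiff_snd.pow 2)).div_const 2
end

section
/- At every point (p,q) ∈ ℝ × ℝ, the function φ has Fréchet derivative equal to the linear map (u,v) ↦ q·u + p·v when p + q ≥ 0, and equal to the linear map (u,v) ↦ -p·u - q·v when p + q < 0; that is, the gradient of φ at (p,q) is (q,p) if p + q ≥ 0 and (-p,-q) if p + q < 0. -/
open Asymptotics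

theorem phi_eq_mul_sub_min_sq (p q : ℝ) : phi p q = p * q - min (p + q) 0 ^ 2 / 2 := by
  unfold phi
  split_ifs with h
  · rw [min_eq_right h]; ring
  · rw [min_eq_left (not_le.mp h).le]; ring

theorem abs_min_zero_sq_sub_sub_le (s t : ℝ) :
    |min s 0 ^ 2 / 2 - min t 0 ^ 2 / 2 - (s - t) * min t 0| ≤ (s - t) ^ 2 / 2 := by
  rw [abs_le]
  rcases le_total s 0 with hs | hs <;> rcases le_total t 0 with ht | ht <;>
    simp only [min_eq_left, min_eq_right, hs, ht] <;> constructor <;> nlinarith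

theorem hasDerivAt_min_zero_sq_div_two (t : ℝ) :
    HasDerivAt (fun s : ℝ => min s 0 ^ 2 / 2) (min t 0) t := by
  rw [hasDerivAt_iff_isLittleO]
  refine IsBigO.trans_isLittleO ?_ (isLittleO_pow_sub_sub t one_lt_two)
  refine IsBigO.of_bound (1 / 2) (Filter.Eventually.of_forall fun s => ?_)
  simp only [smul_eq_mul, Real.norm_eq_abs, abs_pow, sq_abs]
  linarith [abs_min_zero_sq_sub_sub_le s t]

/-- The Fréchet derivative of φ at (p,q) is (u,v) ↦ q·u + p·v when p + q ≥ 0,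
and (u,v) ↦ -p·u - q·v when p + q < 0; i.e. the gradient is (q,p) resp. (-p,-q). -/
theorem phi_hasFDerivAt (p q : ℝ) :
    HasFDerivAt (fun x : ℝ × ℝ => phi x.1 x.2)
      (if 0 ≤ p + q then
        q • ContinuousLinearMap.fst ℝ ℝ ℝ + p • ContinuousLinearMap.snd ℝ ℝ ℝ
      else
        (-p) • ContinuousLinearMap.fst ℝ ℝ ℝ + (-q) • ContinuousLinearMap.snd ℝ ℝ ℝ)
      (p, q) := by
  have hphi : (fun x : ℝ × ℝ => phi x.1 x.2) = fun x => x.1 * x.2 - min (x.1 + x.2) 0 ^ 2 / 2 :=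
    funext fun x => phi_eq_mul_sub_min_sq x.1 x.2
  have hmul := (hasFDerivAt_fst (𝕜 := ℝ) (p := (p, q))).mul hasFDerivAt_snd
  have hsum := (hasFDerivAt_fst (𝕜 := ℝ) (p := (p, q))).add hasFDerivAt_snd
  rw [hphi]
  have hmin := (hasDerivAt_min_zero_sq_div_two (p + q)).comp_hasFDerivAt (p, q) hsum
  refine (hmul.sub hmin).congr_fderiv ?_
  split_ifs with hpq
  · ext <;> simp [min_eq_right hpq]
  · ext <;> simp [min_eq_left (not_le.mp hpq).le]
end

section
/- Let E : ℝⁿ → ℝ be continuously differentiable and bounded below by 0, let w : ℝ → ℝⁿ satisfy w'(t) = -∇E(w(t)) for all t ≥ t₀ with w(t₀) = w₀, and assume the level set L(w₀) = {w ∈ ℝⁿ : E(w) ≤ E(w₀)} is bounded. Then there exist a point w* ∈ ℝⁿ and a strictly increasing sequence {t_k} with t_k → ∞ such that w(t_k) → w* as k → ∞ and ∇E(w*) = 0 (i.e., w* is an equilibrium point of the gradient flow). -/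
/-!
Along the flow, `d/dt E(w t) = -‖∇E(w t)‖²`. Since `E` is bounded below, the mean value
theorem forbids `‖∇E(w t)‖` from staying above any `ε > 0` on a half-line, so
`∇E(w (s k)) → 0` along some times `s k → ∞`. The energy decreases, so `w (s k)` stays in
the bounded level set of `w₀`; a convergent subsequence has a limit `w*`, and `∇E(w*) = 0`
by continuity of `∇E`.
-/

open Filter Topology Set

section RealFunctions

variable {f f' : ℝ → ℝ} {t₀ : ℝ}

theorem antitoneOn_Ici_of_hasDerivAt_nonpos (hf : ∀ t, t₀ ≤ t → HasDerivAt f (f' t) t)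
    (hf' : ∀ t, t₀ ≤ t → f' t ≤ 0) : AntitoneOn f (Ici t₀) := by
  refine antitoneOn_of_deriv_nonpos (convex_Ici t₀)
    (fun t ht => (hf t ht).continuousAt.continuousWithinAt)
    (fun t ht => ?_) (fun t ht => ?_) <;> rw [interior_Ici] at ht
  · exact (hf t ht.le).differentiableAt.differentiableWithinAt
  · exact (hf t ht.le).deriv ▸ hf' t ht.le

theorem frequently_neg_lt_of_hasDerivAt_of_lowerBound {m : ℝ}
    (hf : ∀ t, t₀ ≤ t → HasDerivAt f (f' t) t) (hm : ∀ t, t₀ ≤ t → m ≤ f t)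
    {ε : ℝ} (hε : 0 < ε) : ∃ᶠ t in atTop, -ε < f' t := by
  rw [frequently_atTop]
  intro T
  set a := max T t₀
  have ha : t₀ ≤ a := le_max_right T t₀
  -- over `[a, a + L]` the slope of `f` is at least `(m - f a) / L > -ε`
  set L := (f a - m) / ε + 1
  have hL : 0 < L := by
    have : 0 ≤ f a - m := sub_nonneg.mpr (hm a ha)
    positivity
  have hf_on : ∀ t ∈ Icc a (a + L), HasDerivAt f (f' t) t := fun t ht => hf t (ha.trans ht.1)
  obtain ⟨c, hc, hslope⟩ := exists_hasDerivAt_eq_slope f f' (lt_add_of_pos_right a hL)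
    (fun t ht => (hf_on t ht).continuousAt.continuousWithinAt)
    (fun t ht => hf_on t (Ioo_subset_Icc_self ht))
  refine ⟨c, (le_max_left T t₀).trans hc.1.le, ?_⟩
  rw [hslope, add_sub_cancel_left, lt_div_iff₀ hL]
  have hεL : ε * L = f a - m + ε := by simp only [L]; field_simp
  linarith [hm (a + L) (ha.trans (le_add_of_nonneg_right hL.le))]

end RealFunctions

theorem exists_strictMono_tendsto_of_frequently_norm_lt {F : Type*} [SeminormedAddGroup F]
    {g : ℝ → F} (hg : ∀ ε > 0, ∃ᶠ t in atTop, ‖g t‖ < ε) :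
    ∃ s : ℕ → ℝ, StrictMono s ∧ Tendsto s atTop atTop ∧
      Tendsto (fun k => g (s k)) atTop (𝓝 0) := by
  choose s hs_ge hs_small using fun k : ℕ =>
    frequently_atTop.mp (hg (1 / ((k : ℝ) + 1)) Nat.one_div_pos_of_nat) k
  have hs_top : Tendsto s atTop atTop := tendsto_atTop_mono hs_ge tendsto_natCast_atTop_atTop
  have hg_zero : Tendsto (fun k => g (s k)) atTop (𝓝 0) :=
    squeeze_zero_norm (fun k => (hs_small k).le) tendsto_one_div_add_atTop_nhds_zero_nat
  obtain ⟨φ, hφ, hsφ⟩ := strictMono_subseq_of_tendsto_atTop hs_top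
  exact ⟨s ∘ φ, hsφ, hs_top.comp hφ.tendsto_atTop, hg_zero.comp hφ.tendsto_atTop⟩

section GradientFlow

variable {F : Type*} [NormedAddCommGroup F] [InnerProductSpace ℝ F] [CompleteSpace F]
  {E : F → ℝ} {w : ℝ → F}

theorem hasDerivAt_comp_of_hasDerivAt_neg_gradient {t : ℝ} (hE : DifferentiableAt ℝ E (w t))
    (hw : HasDerivAt w (-gradient E (w t)) t) :
    HasDerivAt (fun s => E (w s)) (-‖gradient E (w t)‖ ^ 2) t := by
  have h := hE.hasGradientAt.hasFDerivAt.comp_hasDerivAt t hw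
  rwa [InnerProductSpace.toDual_apply_apply, inner_neg_right, real_inner_self_eq_norm_sq] at h

theorem ContDiff.continuous_gradient (hE : ContDiff ℝ 1 E) : Continuous (gradient E) := by
  have h : gradient E = (InnerProductSpace.toDual ℝ F).symm ∘ fderiv ℝ E := by
    rw [← toDual_comp_gradient, ← Function.comp_assoc, LinearIsometryEquiv.symm_comp_self,
      Function.id_comp]
  rw [h]
  exact (InnerProductSpace.toDual ℝ F).symm.continuous.comp (hE.continuous_fderiv one_ne_zero)

end GradientFlow

/-- If E is C¹, bounded below by 0, and the level set of the initial point is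
bounded, then the gradient flow w'(t) = -∇E(w(t)) admits an equilibrium point w*
(∇E(w*) = 0) and a strictly increasing time sequence t_k → ∞ with w(t_k) → w*. -/
theorem gradient_flow_equilibrium_exists {n : ℕ}
    (E : EuclideanSpace ℝ (Fin n) → ℝ) (hE : ContDiff ℝ 1 E)
    (hE_nonneg : ∀ u, 0 ≤ E u)
    (t₀ : ℝ) (w : ℝ → EuclideanSpace ℝ (Fin n))
    (w₀ : EuclideanSpace ℝ (Fin n)) (hw₀ : w t₀ = w₀)
    (hw : ∀ t, t₀ ≤ t → HasDerivAt w (-(gradient E (w t))) t)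
    (hlevel : Bornology.IsBounded {u : EuclideanSpace ℝ (Fin n) | E u ≤ E w₀}) :
    ∃ (wstar : EuclideanSpace ℝ (Fin n)) (tk : ℕ → ℝ),
      StrictMono tk ∧ Tendsto tk atTop atTop ∧
      Tendsto (fun k => w (tk k)) atTop (𝓝 wstar) ∧
      gradient E wstar = 0 := by
  have hE_w : ∀ t, t₀ ≤ t → HasDerivAt (fun s => E (w s)) (-‖gradient E (w t)‖ ^ 2) t :=
    fun t ht => hasDerivAt_comp_of_hasDerivAt_neg_gradient
      (hE.differentiable one_ne_zero _) (hw t ht)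
  have hgrad_small : ∀ ε > 0, ∃ᶠ t in atTop, ‖gradient E (w t)‖ < ε := fun ε hε =>
    (frequently_neg_lt_of_hasDerivAt_of_lowerBound hE_w (fun t _ => hE_nonneg (w t))
      (pow_pos hε 2)).mono fun t ht => by
        rwa [neg_lt_neg_iff, pow_lt_pow_iff_left₀ (norm_nonneg _) hε.le two_ne_zero] at ht
  obtain ⟨s, hs_mono, hs_top, hs_grad⟩ :=
    exists_strictMono_tendsto_of_frequently_norm_lt hgrad_small
  have hs_level : ∃ᶠ k in atTop, w (s k) ∈ closure {u | E u ≤ E w₀} := by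
    refine (hs_top.eventually_ge_atTop t₀).frequently.mono fun k hk => subset_closure ?_
    rw [← hw₀]
    exact antitoneOn_Ici_of_hasDerivAt_nonpos hE_w
      (fun t _ => neg_nonpos.mpr (sq_nonneg _)) self_mem_Ici hk hk
  obtain ⟨wstar, -, φ, hφ, hw_lim⟩ := hlevel.isCompact_closure.tendsto_subseq' hs_level
  refine ⟨wstar, s ∘ φ, hs_mono.comp hφ, hs_top.comp hφ.tendsto_atTop, hw_lim, ?_⟩
  exact tendsto_nhds_unique ((hE.continuous_gradient.tendsto wstar).comp hw_lim)
    (hs_grad.comp hφ.tendsto_atTop)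
end

section
/- Let E : ℝⁿ → ℝ be continuously differentiable and convex, let w* ∈ ℝⁿ satisfy ∇E(w*) = 0, and let w : ℝ → ℝⁿ satisfy w'(t) = -∇E(w(t)) for all t ≥ t₀. Suppose there is a strictly increasing sequence {t_k} with t_k → ∞ such that w(t_k) → w*. Then lim_{t → ∞} w(t) = w*, and w* is a global minimizer of E, i.e., E(w*) ≤ E(u) for all u ∈ ℝⁿ. -/
/-!
Convexity turns `∇E(w*) = 0` into global minimality of `w*`, and then the first-order inequality
`⟪∇E(x), w* - x⟫ ≤ E(w*) - E(x) ≤ 0` shows that `‖w(t) - w*‖²` has nonpositive derivative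
`-2⟪w(t) - w*, ∇E(w(t))⟫` along the flow. The distance to `w*` is thus nonincreasing, so its
convergence to `0` along `t_k` forces its convergence to `0` along all `t → ∞`.
-/

open Filter Topology Set
open scoped InnerProductSpace

section FirstOrder

variable {F : Type*} [NormedAddCommGroup F] {f : F → ℝ} {S : Set F} {x y : F}

theorem ConvexOn.fderiv_sub_le [NormedSpace ℝ F] (hf : ConvexOn ℝ S f) (hx : x ∈ S) (hy : y ∈ S)
    (hfx : DifferentiableAt ℝ f x) : fderiv ℝ f x (y - x) ≤ f y - f x := by
  let ℓ : ℝ →ᵃ[ℝ] F := AffineMap.lineMap x y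
  have hfx' : HasFDerivAt f (fderiv ℝ f x) (ℓ 0) := by simpa [ℓ] using hfx.hasFDerivAt
  have hderiv : HasDerivAt (f ∘ ℓ) (fderiv ℝ f x (y - x)) 0 :=
    hfx'.comp_hasDerivAt 0 AffineMap.hasDerivAt_lineMap
  have hslope := (hf.comp_affineMap ℓ).le_slope_of_hasDerivAt (x := 0) (y := 1)
    (by simpa [ℓ] using hx) (by simpa [ℓ] using hy) one_pos hderiv
  simpa [slope_def_field, ℓ] using hslope

variable [InnerProductSpace ℝ F] [CompleteSpace F]

theorem ConvexOn.inner_gradient_sub_le (hf : ConvexOn ℝ S f) (hx : x ∈ S) (hy : y ∈ S)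
    (hfx : DifferentiableAt ℝ f x) : ⟪gradient f x, y - x⟫_ℝ ≤ f y - f x := by
  simpa [gradient, InnerProductSpace.toDual_symm_apply] using hf.fderiv_sub_le hx hy hfx

theorem ConvexOn.isMinOn_of_gradient_eq_zero (hf : ConvexOn ℝ S f) (hx : x ∈ S)
    (hfx : DifferentiableAt ℝ f x) (hgrad : gradient f x = 0) : IsMinOn f S x := fun y hy => by
  simpa [hgrad] using hf.inner_gradient_sub_le hx hy hfx

theorem ConvexOn.inner_gradient_sub_nonneg_of_isMinOn (hf : ConvexOn ℝ S f) (hmin : IsMinOn f S y)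
    (hx : x ∈ S) (hy : y ∈ S) (hfx : DifferentiableAt ℝ f x) : 0 ≤ ⟪gradient f x, x - y⟫_ℝ := by
  have h := hf.inner_gradient_sub_le hx hy hfx
  have : f y ≤ f x := hmin hx
  rw [← neg_sub, inner_neg_right] at h
  linarith

end FirstOrder

theorem antitoneOn_norm_sub_of_inner_deriv_nonpos {F : Type*} [NormedAddCommGroup F]
    [InnerProductSpace ℝ F] {w v : ℝ → F} {p : F} {t₀ : ℝ}
    (hw : ∀ t, t₀ ≤ t → HasDerivAt w (v t) t) (hv : ∀ t, t₀ ≤ t → ⟪w t - p, v t⟫_ℝ ≤ 0) :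
    AntitoneOn (fun t => ‖w t - p‖) (Ici t₀) := by
  have hderiv : ∀ t ∈ Ici t₀,
      HasDerivAt (fun t => ‖w t - p‖ ^ 2) (2 * ⟪w t - p, v t⟫_ℝ) t :=
    fun t ht => ((hw t ht).sub_const p).norm_sq
  have hsq : AntitoneOn (fun t => ‖w t - p‖ ^ 2) (Ici t₀) :=
    antitoneOn_of_hasDerivWithinAt_nonpos (convex_Ici t₀)
      (fun t ht => (hderiv t ht).continuousAt.continuousWithinAt)
      (fun t ht => (hderiv t (interior_subset ht)).hasDerivWithinAt)
      (fun t ht => by linarith [hv t (interior_subset ht)])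
  exact fun s hs t ht hst => (sq_le_sq₀ (norm_nonneg _) (norm_nonneg _)).1 (hsq hs ht hst)

theorem AntitoneOn.tendsto_atTop_of_tendsto_comp {α β ι : Type*} [LinearOrder α] [LinearOrder β]
    [TopologicalSpace β] [OrderTopology β] {f : α → β} {a : α} {L : β} {l : Filter ι} [l.NeBot]
    {s : ι → α} (hf : AntitoneOn f (Ici a)) (hs : Tendsto s l atTop)
    (hfs : Tendsto (f ∘ s) l (𝓝 L)) : Tendsto f atTop (𝓝 L) := by
  refine tendsto_order.2 ⟨fun b hb => ?_, fun b hb => ?_⟩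
  · filter_upwards [eventually_ge_atTop a] with t ht
    refine hb.trans_le (le_of_tendsto hfs ?_)
    filter_upwards [hs.eventually_ge_atTop t] with i hi
    exact hf ht (ht.trans hi) hi
  · obtain ⟨i, hi, hsi⟩ := ((hfs.eventually (gt_mem_nhds hb)).and (hs.eventually_ge_atTop a)).exists
    filter_upwards [eventually_ge_atTop (s i)] with t ht
    exact (hf hsi (hsi.trans ht) ht).trans_lt hi

theorem gradient_flow_converges_to_equilibrium_general {n : ℕ}
    (E : EuclideanSpace ℝ (Fin n) → ℝ) (hE : ContDiff ℝ 1 E)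
    (hconv : ConvexOn ℝ Set.univ E)
    (wstar : EuclideanSpace ℝ (Fin n)) (hstar : gradient E wstar = 0)
    (t₀ : ℝ) (w : ℝ → EuclideanSpace ℝ (Fin n))
    (hw : ∀ t, t₀ ≤ t → HasDerivAt w (-(gradient E (w t))) t)
    (tk : ℕ → ℝ) (htk_top : Tendsto tk atTop atTop)
    (hconv_seq : Tendsto (fun k => w (tk k)) atTop (𝓝 wstar)) :
    Tendsto w atTop (𝓝 wstar) ∧ ∀ u, E wstar ≤ E u := by
  have hdiff : Differentiable ℝ E := hE.differentiable one_ne_zero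
  have hmin : IsMinOn E univ wstar :=
    hconv.isMinOn_of_gradient_eq_zero (mem_univ _) (hdiff wstar) hstar
  have hdist : AntitoneOn (fun t => ‖w t - wstar‖) (Ici t₀) := by
    refine antitoneOn_norm_sub_of_inner_deriv_nonpos hw fun t _ => ?_
    rw [inner_neg_right, real_inner_comm, neg_nonpos]
    exact hconv.inner_gradient_sub_nonneg_of_isMinOn hmin (mem_univ _) (mem_univ _) (hdiff _)
  refine ⟨tendsto_iff_norm_sub_tendsto_zero.2 ?_, fun u => hmin (mem_univ u)⟩
  exact hdist.tendsto_atTop_of_tendsto_comp htk_top (tendsto_iff_norm_sub_tendsto_zero.1 hconv_seq)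

/-- For a convex C¹ function E, if a gradient-flow trajectory has an equilibrium
point w* (∇E(w*) = 0) as limit point along a strictly increasing time sequence
t_k → ∞, then the whole trajectory converges to w*, and w* is a global
minimizer of E. -/
theorem gradient_flow_converges_to_equilibrium {n : ℕ}
    (E : EuclideanSpace ℝ (Fin n) → ℝ) (hE : ContDiff ℝ 1 E)
    (hconv : ConvexOn ℝ Set.univ E)
    (wstar : EuclideanSpace ℝ (Fin n)) (hstar : gradient E wstar = 0)
    (t₀ : ℝ) (w : ℝ → EuclideanSpace ℝ (Fin n))
    (hw : ∀ t, t₀ ≤ t → HasDerivAt w (-(gradient E (w t))) t)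
    (tk : ℕ → ℝ) (htk_mono : StrictMono tk) (htk_top : Tendsto tk atTop atTop)
    (hconv_seq : Tendsto (fun k => w (tk k)) atTop (𝓝 wstar)) :
    Tendsto w atTop (𝓝 wstar) ∧ ∀ u, E wstar ≤ E u :=
  gradient_flow_converges_to_equilibrium_general E hE hconv wstar hstar t₀ w hw tk htk_top hconv_seq
end
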